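/- arXiv:1509.01479 — 4 statements merged into one kernel-verified Lean document; each statement's English description precedes it below -/
import Mathlib

section
/- For ψ ∈ {1, −1} (call and put respectively), ∫_ℝ e^{−rT}·max(ψ·(S_T(z) − K), 0)·φ(z) dz = ψ·S₀·e^{−qT}·Φ(ψd₁) − ψ·K·e^{−rT}·Φ(ψd₂). -/
/-!
Since `φ` is even, substituting `z ↦ ψ z` brings both payoffs to the form
`ψ (S₀ e^{m + ψ s z} - K)` with `m = (r - q - σ²/2) T` and `s = σ √T`, which is nonnegative
exactly on the half-line `z ≥ -ψ d₂`. There the payoff is affine in `e^{ψ s z}`, and completing the square,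
`e^{c z} φ(z) = e^{c²/2} φ(z - c)`, turns both terms into values of `Φ`.
-/

open MeasureTheory

noncomputable def gaussPDF (z : ℝ) : ℝ := (Real.sqrt (2 * Real.pi))⁻¹ * Real.exp (-z ^ 2 / 2)

noncomputable def gaussCDF (x : ℝ) : ℝ := ∫ z in Set.Iic x, gaussPDF z

open Real Set

lemma gaussPDF_eq_gaussianPDFReal : gaussPDF = ProbabilityTheory.gaussianPDFReal 0 1 := by
  ext z
  simp [gaussPDF, ProbabilityTheory.gaussianPDFReal]

lemma integrable_gaussPDF : Integrable gaussPDF :=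
  gaussPDF_eq_gaussianPDFReal ▸ ProbabilityTheory.integrable_gaussianPDFReal 0 1

lemma gaussPDF_neg (z : ℝ) : gaussPDF (-z) = gaussPDF z := by
  simp [gaussPDF]

lemma exp_mul_mul_gaussPDF (c z : ℝ) :
    exp (c * z) * gaussPDF z = exp (c ^ 2 / 2) * gaussPDF (z - c) := by
  simp only [gaussPDF, mul_left_comm (exp _), ← exp_add]
  ring_nf

lemma integrable_exp_mul_mul_gaussPDF (c : ℝ) :
    Integrable fun z => exp (c * z) * gaussPDF z := by
  simp only [exp_mul_mul_gaussPDF]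
  exact (integrable_gaussPDF.comp_sub_right c).const_mul _

lemma setIntegral_Ici_comp_sub_right (f : ℝ → ℝ) (a c : ℝ) :
    ∫ z in Ici a, f (z - c) = ∫ z in Ici (a - c), f z := by
  rw [← integral_indicator measurableSet_Ici, ← integral_indicator measurableSet_Ici]
  conv_rhs => rw [← integral_sub_right_eq_self _ c]
  congr 1 with z
  simp [indicator]

lemma setIntegral_Ici_gaussPDF (a : ℝ) : ∫ z in Ici a, gaussPDF z = gaussCDF (-a) := by
  rw [gaussCDF, ← integral_comp_neg_Ioi, integral_Ici_eq_integral_Ioi]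
  simp only [gaussPDF_neg]

lemma setIntegral_Ici_exp_mul_mul_gaussPDF (a c : ℝ) :
    ∫ z in Ici a, exp (c * z) * gaussPDF z = exp (c ^ 2 / 2) * gaussCDF (c - a) := by
  simp only [exp_mul_mul_gaussPDF]
  rw [integral_const_mul, setIntegral_Ici_comp_sub_right, setIntegral_Ici_gaussPDF, neg_sub]

lemma integral_comp_mul_mul_gaussPDF {ψ : ℝ} (hψ : ψ = 1 ∨ ψ = -1) (f : ℝ → ℝ) :
    ∫ z, f (ψ * z) * gaussPDF z = ∫ z, f z * gaussPDF z := by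
  rcases hψ with rfl | rfl
  · simp only [one_mul]
  · simpa only [neg_one_mul, gaussPDF_neg, neg_neg]
      using integral_neg_eq_self (fun z => f z * gaussPDF (-z)) volume

lemma integral_max_mul_eq_setIntegral_Ici {f g : ℝ → ℝ} {a : ℝ} (hf : ∀ z, 0 ≤ f z ↔ a ≤ z) :
    ∫ z, max (f z) 0 * g z = ∫ z in Ici a, f z * g z := by
  rw [← integral_indicator measurableSet_Ici]
  congr 1 with z
  by_cases hz : a ≤ z
  · simp [indicator, hz, max_eq_left ((hf z).2 hz)]
  · simp [indicator, hz, max_eq_right (le_of_not_ge (mt (hf z).1 hz))]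

lemma zero_le_mul_exp_sub_one_iff {ψ : ℝ} (hψ : ψ = 1 ∨ ψ = -1) (u : ℝ) :
    0 ≤ ψ * (exp u - 1) ↔ 0 ≤ ψ * u := by
  rcases hψ with rfl | rfl
  · simp [one_le_exp_iff]
  · simp [exp_le_one_iff]

lemma zero_le_mul_mul_exp_sub_iff {ψ A K m s : ℝ} (hψ : ψ = 1 ∨ ψ = -1) (hA : 0 < A)
    (hK : 0 < K) (hs : 0 < s) (z : ℝ) :
    0 ≤ ψ * (A * exp (m + s * (ψ * z)) - K) ↔ -(ψ * ((log (A / K) + m) / s)) ≤ z := by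
  have hψ2 : ψ ^ 2 = 1 := by rcases hψ with rfl | rfl <;> norm_num
  have hpayoff : ψ * (A * exp (m + s * (ψ * z)) - K)
      = K * (ψ * (exp (log (A / K) + m + s * (ψ * z)) - 1)) := by
    rw [add_assoc, exp_add (log _), exp_log (div_pos hA hK), exp_add]
    field_simp
  have hexponent : ψ * (log (A / K) + m + s * (ψ * z))
      = s * (z + ψ * ((log (A / K) + m) / s)) := by
    field_simp
    linear_combination s * z * hψ2
  rw [hpayoff, mul_nonneg_iff_of_pos_left hK, zero_le_mul_exp_sub_one_iff hψ, hexponent,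
    mul_nonneg_iff_of_pos_left hs, ← neg_le_iff_add_nonneg]

theorem integral_max_mul_gaussPDF {ψ A K m s : ℝ} (hψ : ψ = 1 ∨ ψ = -1) (hA : 0 < A)
    (hK : 0 < K) (hs : 0 < s) :
    ∫ z, max (ψ * (A * exp (m + s * z) - K)) 0 * gaussPDF z
      = ψ * A * exp (m + s ^ 2 / 2) * gaussCDF (ψ * ((log (A / K) + m) / s + s))
        - ψ * K * gaussCDF (ψ * ((log (A / K) + m) / s)) := by
  have hψ2 : ψ ^ 2 = 1 := by rcases hψ with rfl | rfl <;> norm_num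
  have hsplit : ∀ z, ψ * (A * exp (m + s * (ψ * z)) - K) * gaussPDF z
      = ψ * A * exp m * (exp (ψ * s * z) * gaussPDF z) - ψ * K * gaussPDF z := by
    intro z
    rw [exp_add]
    ring_nf
  rw [← integral_comp_mul_mul_gaussPDF hψ (fun x => max (ψ * (A * exp (m + s * x) - K)) 0),
    integral_max_mul_eq_setIntegral_Ici (zero_le_mul_mul_exp_sub_iff hψ hA hK hs)]
  simp only [hsplit]
  rw [integral_sub ((integrable_exp_mul_mul_gaussPDF _).const_mul _).integrableOn
      (integrable_gaussPDF.const_mul _).integrableOn,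
    integral_const_mul, integral_const_mul, setIntegral_Ici_exp_mul_mul_gaussPDF,
    setIntegral_Ici_gaussPDF, neg_neg, mul_pow, hψ2, one_mul, exp_add, sub_neg_eq_add,
    ← mul_add, add_comm s]
  ring

/-- The Black–Scholes formula for the conditional price of a European option
(`ψ = 1` call, `ψ = -1` put) with rate `r`, dividend yield `q` and volatility `σ`. -/
theorem stmt_8 (S₀ K T σ : ℝ) (r q : ℝ) (hS : 0 < S₀) (hK : 0 < K) (hT : 0 < T)
    (hσ : 0 < σ) (ψ : ℝ) (hψ : ψ = 1 ∨ ψ = -1) :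
    (∫ z : ℝ, Real.exp (-r * T)
        * max (ψ * (S₀ * Real.exp ((r - q - σ ^ 2 / 2) * T + σ * Real.sqrt T * z) - K)) 0
        * gaussPDF z)
      = ψ * S₀ * Real.exp (-q * T)
          * gaussCDF (ψ * ((Real.log (S₀ / K) + (r - q + σ ^ 2 / 2) * T) / (σ * Real.sqrt T)))
        - ψ * K * Real.exp (-r * T)
          * gaussCDF (ψ * ((Real.log (S₀ / K) + (r - q + σ ^ 2 / 2) * T) / (σ * Real.sqrt T)
              - σ * Real.sqrt T)) := by
  have hs : 0 < σ * sqrt T := mul_pos hσ (sqrt_pos.mpr hT)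
  have hd₁ : (log (S₀ / K) + (r - q + σ ^ 2 / 2) * T) / (σ * sqrt T)
      = (log (S₀ / K) + (r - q - σ ^ 2 / 2) * T) / (σ * sqrt T) + σ * sqrt T := by
    field_simp
    rw [sq_sqrt hT.le]
    ring
  have hdiscount : exp (-r * T) * exp ((r - q - σ ^ 2 / 2) * T + (σ * sqrt T) ^ 2 / 2)
      = exp (-q * T) := by
    rw [← exp_add, mul_pow, sq_sqrt hT.le]
    ring_nf
  simp only [mul_assoc (exp (-r * T))]
  rw [integral_const_mul, integral_max_mul_gaussPDF hψ hS hK hs, hd₁, add_sub_cancel_right]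
  linear_combination ψ * S₀ * gaussCDF (ψ * ((log (S₀ / K) + (r - q - σ ^ 2 / 2) * T)
    / (σ * sqrt T) + σ * sqrt T)) * hdiscount
end

section
/- Let ρ_df ∈ (−1, 1) and ρ_sd, ρ_sf ∈ ℝ. Then (ρ_sd² + ρ_sf² − 2ρ_sd·ρ_sf·ρ_df)/(1 − ρ_df²) ≥ max(ρ_sd², ρ_sf²). Moreover, if (ρ_sd, ρ_sf) ≠ (0, 0), then equality holds if and only if either |ρ_sd| ≥ |ρ_sf| and ρ_sf = ρ_sd·ρ_df, or |ρ_sd| < |ρ_sf| and ρ_sd = ρ_sf·ρ_df. -/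
/-- Inequality (5.5) and its equality case (5.6): for correlation coefficients
`ρ_sd, ρ_sf` and `ρ_df ∈ (−1, 1)`,
`(ρ_sd² + ρ_sf² − 2ρ_sd ρ_sf ρ_df)/(1 − ρ_df²) ≥ max(ρ_sd², ρ_sf²)`, with equality
(when `(ρ_sd, ρ_sf) ≠ (0,0)`) iff `|ρ_sd| ≥ |ρ_sf|` and `ρ_sf = ρ_sd ρ_df`, or
`|ρ_sd| < |ρ_sf|` and `ρ_sd = ρ_sf ρ_df`. -/
theorem stmt_11 (ρsd ρsf ρdf : ℝ) (hdf : ρdf ∈ Set.Ioo (-1 : ℝ) 1) :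
    max (ρsd ^ 2) (ρsf ^ 2) ≤ (ρsd ^ 2 + ρsf ^ 2 - 2 * ρsd * ρsf * ρdf) / (1 - ρdf ^ 2)
    ∧ ((ρsd, ρsf) ≠ (0, 0) →
        ((ρsd ^ 2 + ρsf ^ 2 - 2 * ρsd * ρsf * ρdf) / (1 - ρdf ^ 2)
            = max (ρsd ^ 2) (ρsf ^ 2)
          ↔ (|ρsf| ≤ |ρsd| ∧ ρsf = ρsd * ρdf) ∨ (|ρsd| < |ρsf| ∧ ρsd = ρsf * ρdf))) := by
  obtain ⟨h1, h2⟩ := hdf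
  have hD : 0 < 1 - ρdf ^ 2 := by nlinarith
  have habs : ∀ a b : ℝ, |a| ≤ |b| ↔ a ^ 2 ≤ b ^ 2 := by
    intro a b
    constructor
    · intro h; nlinarith [abs_nonneg a, abs_nonneg b, sq_abs a, sq_abs b]
    · intro h; nlinarith [abs_nonneg a, abs_nonneg b, sq_abs a, sq_abs b]
  constructor
  · rw [max_le_iff]
    constructor
    · rw [le_div_iff₀ hD]
      nlinarith [sq_nonneg (ρsf - ρsd * ρdf)]
    · rw [le_div_iff₀ hD]
      nlinarith [sq_nonneg (ρsd - ρsf * ρdf)]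
  · intro _
    rw [div_eq_iff hD.ne']
    rcases le_or_gt (|ρsf|) (|ρsd|) with h | h
    · have hmax : max (ρsd ^ 2) (ρsf ^ 2) = ρsd ^ 2 :=
        max_eq_left ((habs ρsf ρsd).mp h)
      rw [hmax]
      constructor
      · intro he
        left
        refine ⟨h, ?_⟩
        have : (ρsf - ρsd * ρdf) ^ 2 = 0 := by nlinarith
        have := pow_eq_zero_iff (n := 2) (by norm_num) |>.mp this
        linarith
      · rintro (⟨-, he⟩ | ⟨hlt, -⟩)
        · rw [he]; ring
        · exact absurd h (not_le.mpr hlt)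
    · have hmax : max (ρsd ^ 2) (ρsf ^ 2) = ρsf ^ 2 := by
        apply max_eq_right
        have := (habs ρsd ρsf).mp h.le
        linarith
      rw [hmax]
      constructor
      · intro he
        right
        refine ⟨h, ?_⟩
        have : (ρsd - ρsf * ρdf) ^ 2 = 0 := by nlinarith
        have := pow_eq_zero_iff (n := 2) (by norm_num) |>.mp this
        linarith
      · rintro (⟨hle, -⟩ | ⟨-, he⟩)
        · exact absurd hle (not_le.mpr h)
        · rw [he]; ring
end

section
/- For all k, θ, ξ, T > 0 and v₀ ≥ 0: (ξ²/k²)·(θT + v₀/k − 5θ/(2k) + 2e^{−kT}·(θ/k + θT − v₀T) + e^{−2kT}·(θ/(2k) − v₀/k)) < (ξ²/k²)·(1 + e^{−kT})·(θT + v₀/k − θ/k + e^{−kT}·(θ/k − v₀/k)). -/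
/-- Key scalar inequality: for `x > 0`, `3 - 2x e^{-x} - 4 e^{-x} + e^{-2x} > 0`. -/
lemma key_ineq (x : ℝ) (hx : 0 < x) :
    0 < 3 - 2 * x * Real.exp (-x) - 4 * Real.exp (-x) + Real.exp (-x) ^ 2 := by
  have hE : Real.exp (-x) * Real.exp x = 1 := by
    rw [← Real.exp_add]; simp
  have h1 : x + 1 < Real.exp x := Real.add_one_lt_exp (ne_of_gt hx)
  have h2 : x / 2 + 1 ≤ Real.exp (x / 2) := Real.add_one_le_exp _
  have h3 : Real.exp x = Real.exp (x / 2) ^ 2 := by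
    rw [sq, ← Real.exp_add]; ring_nf
  have he : 0 < Real.exp (-x) := Real.exp_pos _
  have hEx : 0 < Real.exp x := Real.exp_pos _
  nlinarith [sq_nonneg (Real.exp x - 1 - x), sq_nonneg (Real.exp (x/2) - 1 - x/2),
    mul_pos hx hx, sq_nonneg (Real.exp (-x) - 1), mul_pos he he,
    mul_pos (mul_pos he he) hEx, mul_pos he hEx]

/-- Inequality (4.11.4): the variance of the time-integrated CIR process (Dufresne's
closed form) is strictly smaller than `(ξ²/k²)(1 + e^{−kT})` times its mean. -/
theorem stmt_12 (k θ ξ T v₀ : ℝ) (hk : 0 < k) (hθ : 0 < θ) (hξ : 0 < ξ) (hT : 0 < T)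
    (hv : 0 ≤ v₀) :
    ξ ^ 2 / k ^ 2 * (θ * T + v₀ / k - 5 * θ / (2 * k)
        + 2 * Real.exp (-k * T) * (θ / k + θ * T - v₀ * T)
        + Real.exp (-2 * k * T) * (θ / (2 * k) - v₀ / k))
      < ξ ^ 2 / k ^ 2 * (1 + Real.exp (-k * T))
          * (θ * T + v₀ / k - θ / k + Real.exp (-k * T) * (θ / k - v₀ / k)) := by
  have hkT : 0 < k * T := mul_pos hk hT
  have key := key_ineq (k * T) hkT
  have he2 : Real.exp (-2 * k * T) = Real.exp (-k * T) ^ 2 := by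
    rw [show (-2 : ℝ) * k * T = -k * T + -k * T by ring, Real.exp_add, sq]
  have hne : Real.exp (-k * T) = Real.exp (-(k * T)) := by ring_nf
  have he : 0 < Real.exp (-k * T) := Real.exp_pos _
  have hxk : 0 < ξ ^ 2 / k ^ 2 := by positivity
  have hk' : k ≠ 0 := ne_of_gt hk
  rw [he2, hne]
  rw [hne] at he
  have expand : (1 + Real.exp (-(k * T)))
          * (θ * T + v₀ / k - θ / k + Real.exp (-(k * T)) * (θ / k - v₀ / k))
      - (θ * T + v₀ / k - 5 * θ / (2 * k)
        + 2 * Real.exp (-(k * T)) * (θ / k + θ * T - v₀ * T)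
        + Real.exp (-(k * T)) ^ 2 * (θ / (2 * k) - v₀ / k))
      = (θ / (2 * k)) * (3 - 2 * (k * T) * Real.exp (-(k * T))
          - 4 * Real.exp (-(k * T)) + Real.exp (-(k * T)) ^ 2)
        + 2 * v₀ * T * Real.exp (-(k * T)) := by
    field_simp
    ring
  have h1 : 0 < θ / (2 * k) := by positivity
  have h2 : 0 ≤ 2 * v₀ * T * Real.exp (-(k * T)) := by positivity
  have inner : (θ * T + v₀ / k - 5 * θ / (2 * k)
        + 2 * Real.exp (-(k * T)) * (θ / k + θ * T - v₀ * T)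
        + Real.exp (-(k * T)) ^ 2 * (θ / (2 * k) - v₀ / k))
      < (1 + Real.exp (-(k * T)))
          * (θ * T + v₀ / k - θ / k + Real.exp (-(k * T)) * (θ / k - v₀ / k)) := by
    rw [← sub_pos, expand]
    nlinarith [mul_pos h1 key]
  calc ξ ^ 2 / k ^ 2 * (θ * T + v₀ / k - 5 * θ / (2 * k)
        + 2 * Real.exp (-(k * T)) * (θ / k + θ * T - v₀ * T)
        + Real.exp (-(k * T)) ^ 2 * (θ / (2 * k) - v₀ / k))
      < ξ ^ 2 / k ^ 2 * ((1 + Real.exp (-(k * T)))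
          * (θ * T + v₀ / k - θ / k + Real.exp (-(k * T)) * (θ / k - v₀ / k))) :=
        mul_lt_mul_of_pos_left inner hxk
    _ = ξ ^ 2 / k ^ 2 * (1 + Real.exp (-(k * T)))
          * (θ * T + v₀ / k - θ / k + Real.exp (-(k * T)) * (θ / k - v₀ / k)) := by ring
end

section
/- Let α ≥ 1, k > 0, ξ > 0, ρ_sv ∈ [−1, 1], and a₁₁, a₁₂, a₁₃ ∈ ℝ with a₁₁² + a₁₂² + a₁₃² + ρ_sv² = 1 and a₁₃ ≠ 0. Define q₀(α) = (1/(2α²ξ²a₁₃²))·(√((2αρ_svξk + α²ξ²(a₁₁² + a₁₂²) − αξ²)² + 4α²a₁₃²ξ²k²) − (2αρ_svξk + α²ξ²(a₁₁² + a₁₂²) − αξ²)). If k > αρ_svξ + √(α(α − 1))·ξ, then q₀(α) > 1. -/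
/-- If `k > αρ_svξ + √(α(α−1))ξ` then `q₀(α) > 1`, where `q₀(α)` is the positive root of
the quadratic `α²ξ²a₁₃² x² + (2αρ_svξk + α²ξ²(a₁₁²+a₁₂²) − αξ²) x − k² = 0`. -/
theorem stmt_14 (α k ξ ρsv a11 a12 a13 : ℝ)
    (hα : 1 ≤ α) (hk : 0 < k) (hξ : 0 < ξ) (hρ : ρsv ∈ Set.Icc (-1 : ℝ) 1)
    (hnorm : a11 ^ 2 + a12 ^ 2 + a13 ^ 2 + ρsv ^ 2 = 1) (ha13 : a13 ≠ 0)
    (hcond : α * ρsv * ξ + Real.sqrt (α * (α - 1)) * ξ < k) :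
    1 < 1 / (2 * α ^ 2 * ξ ^ 2 * a13 ^ 2) *
        (Real.sqrt ((2 * α * ρsv * ξ * k + α ^ 2 * ξ ^ 2 * (a11 ^ 2 + a12 ^ 2)
              - α * ξ ^ 2) ^ 2 + 4 * α ^ 2 * a13 ^ 2 * ξ ^ 2 * k ^ 2)
          - (2 * α * ρsv * ξ * k + α ^ 2 * ξ ^ 2 * (a11 ^ 2 + a12 ^ 2) - α * ξ ^ 2)) := by
  obtain ⟨hρ1, hρ2⟩ := hρ
  have hA : (0:ℝ) < 2 * α ^ 2 * ξ ^ 2 * a13 ^ 2 := by positivity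
  set B := 2 * α * ρsv * ξ * k + α ^ 2 * ξ ^ 2 * (a11 ^ 2 + a12 ^ 2) - α * ξ ^ 2 with hBdef
  set D := B ^ 2 + 4 * α ^ 2 * a13 ^ 2 * ξ ^ 2 * k ^ 2 with hDdef
  have hαα : 0 ≤ α * (α - 1) := by nlinarith
  have hsq : Real.sqrt (α * (α - 1)) ^ 2 = α * (α - 1) := Real.sq_sqrt hαα
  have h1 : 0 ≤ Real.sqrt (α * (α - 1)) * ξ := by positivity
  have h2 : α * (α - 1) * ξ ^ 2 < (k - α * ρsv * ξ) ^ 2 := by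
    nlinarith [hsq, h1, hcond]
  have hkey : α ^ 2 * ξ ^ 2 * a13 ^ 2 + B < k ^ 2 := by
    have hsub : a11 ^ 2 + a12 ^ 2 = 1 - ρsv ^ 2 - a13 ^ 2 := by linarith
    rw [hBdef, hsub]
    nlinarith [h2]
  have hDpos : 0 < D := by
    have : (0:ℝ) < 4 * α ^ 2 * a13 ^ 2 * ξ ^ 2 * k ^ 2 := by positivity
    nlinarith [sq_nonneg B]
  have hmain : 2 * α ^ 2 * ξ ^ 2 * a13 ^ 2 + B < Real.sqrt D := by
    rcases le_or_gt (2 * α ^ 2 * ξ ^ 2 * a13 ^ 2 + B) 0 with h | h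
    · exact lt_of_le_of_lt h (Real.sqrt_pos.mpr hDpos)
    · rw [Real.lt_sqrt h.le]
      nlinarith [hkey, hA]
  calc (1:ℝ) = 1 / (2 * α ^ 2 * ξ ^ 2 * a13 ^ 2) * (2 * α ^ 2 * ξ ^ 2 * a13 ^ 2) := by
        field_simp
    _ < _ := by
        apply mul_lt_mul_of_pos_left _ (by positivity)
        linarith
end
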